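/- For every s ∈ Γ, the quantity ‖λ(s)ξ_y − ξ_{s·y}‖₂ tends to 0 as y → ∞ along the cofinite filter on Δ_Γ (restricted to y ≠ e), where s·y denotes the Bernoulli shift of y by s. -/

import Mathlib

open Function

/-- The group `Δ_Γ = ⊕_Γ Δ` of finitely supported functions `Γ → Δ`
under pointwise multiplication, as a subgroup of `Γ → Δ`. -/
def DeltaGamma (Γ Δ : Type*) [Group Δ] : Subgroup (Γ → Δ) where
  carrier := {y | (mulSupport y).Finite}
  one_mem' := by simp [mulSupport_one]
  mul_mem' := by
    intro a b ha hb
    exact ((Set.Finite.union ha hb).subset (mulSupport_mul a b))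
  inv_mem' := by
    intro a ha
    simpa [mulSupport_inv] using ha

/-- The Bernoulli shift of `Γ` on `Δ_Γ`: `(s·y)(t) = y(s⁻¹t)`. -/
def bshift {Γ Δ : Type*} [Group Γ] [Group Δ] (s : Γ) (y : DeltaGamma Γ Δ) :
    DeltaGamma Γ Δ :=
  ⟨fun t => (y : Γ → Δ) (s⁻¹ * t), by
    have hy : (mulSupport (y : Γ → Δ)).Finite := y.2
    refine Set.Finite.subset (hy.image (fun t => s * t)) ?_
    intro t ht
    exact ⟨s⁻¹ * t, ht, by group⟩⟩

/-- A proper length function on a group. -/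
structure IsProperLength {G : Type*} [Group G] (l : G → ℝ) : Prop where
  nonneg : ∀ s, 0 ≤ l s
  eq_zero_iff : ∀ s, l s = 0 ↔ s = 1
  mul_le : ∀ s t, l (s * t) ≤ l s + l t
  inv_eq : ∀ s, l s⁻¹ = l s
  proper : ∀ R : ℝ, {s : G | l s ≤ R}.Finite

open Classical in
/-- `w(y,t) = l_Γ(t) + l_Δ(y t)` if `t ∈ supp y`, and `0` otherwise. -/
noncomputable def wt {Γ Δ : Type*} [Group Δ] (lG : Γ → ℝ) (lD : Δ → ℝ)
    (y : Γ → Δ) (t : Γ) : ℝ :=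
  if y t ≠ 1 then lG t + lD (y t) else 0

/-- `w(y) = Σ_t w(y,t)`. -/
noncomputable def w {Γ Δ : Type*} [Group Δ] (lG : Γ → ℝ) (lD : Δ → ℝ)
    (y : Γ → Δ) : ℝ :=
  ∑ᶠ t, wt lG lD y t

/-- The coefficients of the unit vector `ξ_y ∈ ℓ²(Γ)`: `ξ_y(t) = (w(y,t)/w(y))^{1/2}`. -/
noncomputable def xi {Γ Δ : Type*} [Group Δ] (lG : Γ → ℝ) (lD : Δ → ℝ)
    (y : Γ → Δ) (t : Γ) : ℝ :=
  Real.sqrt (wt lG lD y t / w lG lD y)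

/-! Reindexing by `u ↦ s * u`, the vectors `λ(s)ξ_y` and `ξ_{s·y}` are the normalized square roots
of the weight vectors `u ↦ w(y,u)` and `u ↦ w(s·y, s u)`, which differ by at most `l_Γ(s)` at each
point of `supp y`. Since `(√x - √y)² ≤ |x - y|`, this gives
`‖λ(s)ξ_y − ξ_{s·y}‖² ≤ 2 l_Γ(s) |supp y| / w(y)`. Properness makes `w(y) → ∞` along the cofinite
filter, and also `|supp y| / w(y) → 0`: at most `#{l_Γ ≤ R}` points of the support have length
`≤ R`, so `R |supp y| ≤ R #{l_Γ ≤ R} + w(y)`. -/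

open Filter Topology

theorem Set.Finite.setOf_mulSupport_subset_and_forall_mem {ι M : Type*} [One M] {S : Set ι}
    {D : Set M} (hS : S.Finite) (hD : D.Finite) :
    {f : ι → M | mulSupport f ⊆ S ∧ ∀ i, f i ∈ D}.Finite := by
  have : Finite S := hS.to_subtype
  refine Set.Finite.of_finite_image (f := fun f (i : S) => f i) ?_ ?_
  · refine (Set.Finite.pi' fun _ : S => hD).subset ?_
    rintro _ ⟨f, hf, rfl⟩ i
    exact hf.2 i
  · intro f hf g hg hfg
    funext i
    by_cases hi : i ∈ S
    · exact congrFun hfg ⟨i, hi⟩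
    · rw [notMem_mulSupport.1 fun h => hi (hf.1 h), notMem_mulSupport.1 fun h => hi (hg.1 h)]

theorem sq_sqrt_sub_sqrt_le_abs {x y : ℝ} (hx : 0 ≤ x) (hy : 0 ≤ y) :
    (√x - √y) ^ 2 ≤ |x - y| := by
  wlog h : y ≤ x generalizing x y
  · rw [abs_sub_comm, ← neg_sub, neg_sq]
    exact this hy hx (le_of_not_ge h)
  rw [abs_of_nonneg (sub_nonneg.2 h)]
  nlinarith [Real.sq_sqrt hx, Real.sq_sqrt hy, Real.sqrt_le_sqrt h, Real.sqrt_nonneg y]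

theorem mul_abs_inv_sub_inv_le {A B : ℝ} (hA : 0 < A) (hB : 0 ≤ B) :
    B * |A⁻¹ - B⁻¹| ≤ |A - B| / A := by
  rcases hB.eq_or_lt with rfl | hB
  · rw [zero_mul]
    positivity
  · apply le_of_eq
    calc B * |A⁻¹ - B⁻¹| = |B * (A⁻¹ - B⁻¹)| := by rw [abs_mul, abs_of_pos hB]
      _ = |(B - A) / A| := by congr 1; field_simp
      _ = |A - B| / A := by rw [abs_div, abs_of_pos hA, abs_sub_comm]

theorem sum_sq_sqrt_div_sub_sqrt_div_le {ι : Type*} (s : Finset ι) {a b : ι → ℝ}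
    (ha : ∀ i ∈ s, 0 ≤ a i) (hb : ∀ i ∈ s, 0 ≤ b i) (hA : 0 < ∑ i ∈ s, a i) :
    ∑ i ∈ s, (√(a i / ∑ j ∈ s, a j) - √(b i / ∑ j ∈ s, b j)) ^ 2 ≤
      2 * (∑ i ∈ s, |a i - b i|) / ∑ i ∈ s, a i := by
  set A := ∑ j ∈ s, a j
  set B := ∑ j ∈ s, b j
  have hB : 0 ≤ B := Finset.sum_nonneg hb
  have hterm : ∀ i ∈ s, (√(a i / A) - √(b i / B)) ^ 2 ≤ |a i - b i| / A + b i * |A⁻¹ - B⁻¹| := by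
    intro i hi
    calc (√(a i / A) - √(b i / B)) ^ 2 ≤ |a i / A - b i / B| :=
          sq_sqrt_sub_sqrt_le_abs (div_nonneg (ha i hi) hA.le) (div_nonneg (hb i hi) hB)
      _ = |(a i - b i) / A + b i * (A⁻¹ - B⁻¹)| := by congr 1; ring
      _ ≤ |a i - b i| / A + b i * |A⁻¹ - B⁻¹| := by
          grw [abs_add_le, abs_div, abs_mul, abs_of_pos hA, abs_of_nonneg (hb i hi)]
  have hmass : |A - B| ≤ ∑ i ∈ s, |a i - b i| := by
    rw [← Finset.sum_sub_distrib]
    exact Finset.abs_sum_le_sum_abs _ _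
  calc _ ≤ ∑ i ∈ s, (|a i - b i| / A + b i * |A⁻¹ - B⁻¹|) := Finset.sum_le_sum hterm
    _ = (∑ i ∈ s, |a i - b i|) / A + B * |A⁻¹ - B⁻¹| := by
        rw [Finset.sum_add_distrib, ← Finset.sum_div, ← Finset.sum_mul]
    _ ≤ (∑ i ∈ s, |a i - b i|) / A + |A - B| / A := by grw [mul_abs_inv_sub_inv_le hA hB]
    _ ≤ 2 * (∑ i ∈ s, |a i - b i|) / A := by
        rw [← add_div, two_mul]
        gcongr

theorem IsProperLength.abs_sub_mul_le {G : Type*} [Group G] {l : G → ℝ} (hl : IsProperLength l)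
    (s u : G) : |l u - l (s * u)| ≤ l s := by
  have h₁ := hl.mul_le s u
  have h₂ := hl.mul_le s⁻¹ (s * u)
  rw [inv_mul_cancel_left, hl.inv_eq] at h₂
  exact abs_le.2 ⟨by linarith, by linarith⟩

@[simp]
theorem bshift_apply {Γ Δ : Type*} [Group Γ] [Group Δ] (s : Γ) (y : DeltaGamma Γ Δ) (t : Γ) :
    (bshift s y : Γ → Δ) t = (y : Γ → Δ) (s⁻¹ * t) :=
  rfl

section Weights

variable {Γ Δ : Type*} [Group Δ] {lG : Γ → ℝ} {lD : Δ → ℝ}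

theorem wt_of_ne_one {y : Γ → Δ} {t : Γ} (ht : y t ≠ 1) : wt lG lD y t = lG t + lD (y t) :=
  if_pos ht

theorem wt_of_eq_one {y : Γ → Δ} {t : Γ} (ht : y t = 1) : wt lG lD y t = 0 :=
  if_neg (not_not.2 ht)

theorem support_wt_subset (y : Γ → Δ) : support (wt lG lD y) ⊆ mulSupport y :=
  fun _ ht => by_contra fun h => ht (wt_of_eq_one (notMem_mulSupport.1 h))

theorem w_eq_sum_of_subset {y : Γ → Δ} {F : Finset Γ} (hF : mulSupport y ⊆ F) :
    w lG lD y = ∑ t ∈ F, wt lG lD y t :=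
  finsum_eq_finsetSum_of_support_subset _ ((support_wt_subset y).trans hF)

theorem finite_mulSupport (y : DeltaGamma Γ Δ) : (mulSupport (y : Γ → Δ)).Finite :=
  y.2

theorem lG_le_wt (hD : IsProperLength lD) {y : Γ → Δ} {t : Γ} (ht : y t ≠ 1) :
    lG t ≤ wt lG lD y t := by
  rw [wt_of_ne_one ht]
  linarith [hD.nonneg (y t)]

variable [Group Γ]

theorem lD_le_wt (hG : IsProperLength lG) {y : Γ → Δ} {t : Γ} (ht : y t ≠ 1) :
    lD (y t) ≤ wt lG lD y t := by
  rw [wt_of_ne_one ht]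
  linarith [hG.nonneg t]

theorem wt_nonneg (hG : IsProperLength lG) (hD : IsProperLength lD) (y : Γ → Δ) (t : Γ) :
    0 ≤ wt lG lD y t := by
  by_cases ht : y t = 1
  · exact (wt_of_eq_one ht).ge
  · exact (hD.nonneg _).trans (lD_le_wt hG ht)

theorem w_nonneg (hG : IsProperLength lG) (hD : IsProperLength lD) (y : Γ → Δ) :
    0 ≤ w lG lD y :=
  finsum_nonneg fun t => wt_nonneg hG hD y t

theorem wt_pos (hG : IsProperLength lG) (hD : IsProperLength lD) {y : Γ → Δ} {t : Γ}
    (ht : y t ≠ 1) : 0 < wt lG lD y t :=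
  ((hD.nonneg _).lt_of_ne fun h => ht ((hD.eq_zero_iff _).1 h.symm)).trans_le (lD_le_wt hG ht)

theorem wt_le_w (hG : IsProperLength lG) (hD : IsProperLength lD) {y : Γ → Δ}
    (hy : (mulSupport y).Finite) (t : Γ) : wt lG lD y t ≤ w lG lD y := by
  rw [w_eq_sum_of_subset hy.coe_toFinset.ge]
  by_cases ht : y t = 1
  · rw [wt_of_eq_one ht]
    exact Finset.sum_nonneg fun t _ => wt_nonneg hG hD y t
  · exact Finset.single_le_sum (fun t _ => wt_nonneg hG hD y t) (hy.mem_toFinset.2 ht)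

theorem w_pos (hG : IsProperLength lG) (hD : IsProperLength lD) {y : Γ → Δ}
    (hy : (mulSupport y).Finite) (hne : y ≠ 1) : 0 < w lG lD y := by
  obtain ⟨t, ht⟩ := Function.ne_iff.1 hne
  exact (wt_pos hG hD ht).trans_le (wt_le_w hG hD hy t)

theorem finite_setOf_w_le (hG : IsProperLength lG) (hD : IsProperLength lD) (K : ℝ) :
    {y : DeltaGamma Γ Δ | w lG lD y ≤ K}.Finite := by
  have hfin := (hG.proper K).setOf_mulSupport_subset_and_forall_mem
    ((hD.proper K).union (Set.finite_singleton 1))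
  refine (hfin.preimage Subtype.val_injective.injOn).subset fun y hy => ⟨fun t ht => ?_, fun t => ?_⟩
  · exact (lG_le_wt hD ht).trans ((wt_le_w hG hD (finite_mulSupport y) t).trans hy)
  · by_cases ht : (y : Γ → Δ) t = 1
    · exact Or.inr ht
    · exact Or.inl ((lD_le_wt hG ht).trans ((wt_le_w hG hD (finite_mulSupport y) t).trans hy))

theorem tendsto_w_cofinite_atTop (hG : IsProperLength lG) (hD : IsProperLength lD) :
    Tendsto (fun y : DeltaGamma Γ Δ => w lG lD y) cofinite atTop :=
  tendsto_atTop.2 fun K =>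
    (finite_setOf_w_le hG hD K).subset fun _ (hy : ¬K ≤ _) => (not_le.1 hy).le

theorem ncard_mulSupport_mul_le (hG : IsProperLength lG) (hD : IsProperLength lD) {y : Γ → Δ}
    (hy : (mulSupport y).Finite) {R : ℝ} (hR : 0 ≤ R) :
    (mulSupport y).ncard * R ≤ {t | lG t ≤ R}.ncard * R + w lG lD y := by
  classical
  set F := hy.toFinset
  have hsmall : (F.filter (lG · ≤ R)).card ≤ {t | lG t ≤ R}.ncard := by
    rw [Set.ncard_eq_toFinset_card _ (hG.proper R)]
    exact Finset.card_le_card fun t ht => by simpa using (Finset.mem_filter.1 ht).2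
  have hlarge : (F.filter (¬lG · ≤ R)).card * R ≤ w lG lD y := by
    calc (F.filter (¬lG · ≤ R)).card * R = ∑ _t ∈ F.filter (¬lG · ≤ R), R := by simp
      _ ≤ ∑ t ∈ F.filter (¬lG · ≤ R), wt lG lD y t := Finset.sum_le_sum fun t ht => by
          obtain ⟨htF, htR⟩ := Finset.mem_filter.1 ht
          exact (not_le.1 htR).le.trans (lG_le_wt hD (hy.mem_toFinset.1 htF))
      _ ≤ ∑ t ∈ F, wt lG lD y t := Finset.sum_le_sum_of_subset_of_nonneg
          (Finset.filter_subset _ _) fun t _ _ => wt_nonneg hG hD y t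
      _ = w lG lD y := (w_eq_sum_of_subset hy.coe_toFinset.ge).symm
  rw [Set.ncard_eq_toFinset_card _ hy, ← Finset.card_filter_add_card_filter_not (lG · ≤ R)]
  push_cast
  nlinarith [(Nat.cast_le (α := ℝ)).2 hsmall]

theorem tendsto_ncard_div_w (hG : IsProperLength lG) (hD : IsProperLength lD) :
    Tendsto (fun y : DeltaGamma Γ Δ => ((mulSupport (y : Γ → Δ)).ncard : ℝ) / w lG lD y)
      cofinite (𝓝 0) := by
  have hw := tendsto_w_cofinite_atTop hG hD
  refine tendsto_order.2 ⟨fun a ha => Eventually.of_forall fun y => ha.trans_le ?_, fun ε hε => ?_⟩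
  · exact div_nonneg (Nat.cast_nonneg _) (w_nonneg hG hD y)
  set R := 2 / ε
  have hR : 0 < R := by positivity
  have hm : Tendsto (fun y : DeltaGamma Γ Δ => ({t | lG t ≤ R}.ncard : ℝ) / w lG lD y)
      cofinite (𝓝 0) := tendsto_const_nhds.div_atTop hw
  filter_upwards [hm.eventually (gt_mem_nhds (half_pos hε)), hw.eventually_gt_atTop 0]
    with y hmy hwy
  have hcard := ncard_mulSupport_mul_le hG hD (finite_mulSupport y) hR.le
  rw [div_lt_iff₀ hwy] at hmy ⊢
  have hRε : R * ε = 2 := div_mul_cancel₀ 2 hε.ne'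
  -- `|supp y| R ≤ #{l_Γ ≤ R} R + w(y) < (ε / 2) w(y) R + w(y) = 2 w(y) = ε R w(y)`
  nlinarith

theorem abs_wt_sub_wt_bshift_le (hG : IsProperLength lG) (s : Γ) (y : DeltaGamma Γ Δ) (u : Γ) :
    |wt lG lD y u - wt lG lD (bshift s y) (s * u)| ≤ lG s := by
  have hshift : (bshift s y : Γ → Δ) (s * u) = (y : Γ → Δ) u := by simp
  by_cases hu : (y : Γ → Δ) u = 1
  · rw [wt_of_eq_one hu, wt_of_eq_one (hshift.trans hu), sub_zero, abs_zero]
    exact hG.nonneg s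
  · rw [wt_of_ne_one hu, wt_of_ne_one (hshift.trans_ne hu), hshift, add_sub_add_right_eq_sub]
    exact hG.abs_sub_mul_le s u

theorem tsum_sq_xi_sub_xi_bshift_le (hG : IsProperLength lG) (hD : IsProperLength lD) (s : Γ)
    {y : DeltaGamma Γ Δ} (hy : y ≠ 1) :
    ∑' t, (xi lG lD (y : Γ → Δ) (s⁻¹ * t) - xi lG lD (bshift s y : Γ → Δ) t) ^ 2 ≤
      2 * lG s * ((mulSupport (y : Γ → Δ)).ncard / w lG lD y) := by
  set F := (finite_mulSupport y).toFinset
  set a := wt lG lD (y : Γ → Δ)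
  set b := fun u => wt lG lD (bshift s y : Γ → Δ) (s * u)
  have hF : mulSupport (y : Γ → Δ) ⊆ F := (finite_mulSupport y).coe_toFinset.ge
  have hb : support b ⊆ F := fun u hu =>
    hF (by simpa using support_wt_subset (bshift s y : Γ → Δ) hu)
  have hwa : w lG lD y = ∑ u ∈ F, a u := w_eq_sum_of_subset hF
  have hwb : w lG lD (bshift s y) = ∑ u ∈ F, b u := by
    rw [w, ← finsum_comp_equiv (Equiv.mulLeft s)]
    exact finsum_eq_finsetSum_of_support_subset _ hb
  have hpos : 0 < ∑ u ∈ F, a u :=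
    hwa ▸ w_pos hG hD (finite_mulSupport y) fun h => hy (Subtype.ext h)
  calc ∑' t, (xi lG lD (y : Γ → Δ) (s⁻¹ * t) - xi lG lD (bshift s y : Γ → Δ) t) ^ 2
      = ∑' u, (xi lG lD (y : Γ → Δ) u - xi lG lD (bshift s y : Γ → Δ) (s * u)) ^ 2 := by
        rw [← (Equiv.mulLeft s).tsum_eq]
        simp
    _ = ∑ u ∈ F, (√(a u / ∑ v ∈ F, a v) - √(b u / ∑ v ∈ F, b v)) ^ 2 := by
        rw [tsum_eq_sum (s := F)]
        · simp only [xi, hwa, hwb, a, b]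
        intro u hu
        have ha0 : a u = 0 := notMem_support.1 fun h => hu (hF (support_wt_subset _ h))
        have hb0 : b u = 0 := notMem_support.1 fun h => hu (hb h)
        simp only [a, b] at ha0 hb0
        simp [xi, ha0, hb0]
    _ ≤ 2 * (∑ u ∈ F, |a u - b u|) / ∑ u ∈ F, a u :=
        sum_sq_sqrt_div_sub_sqrt_div_le F (fun u _ => wt_nonneg hG hD _ u)
          (fun u _ => wt_nonneg hG hD _ _) hpos
    _ ≤ 2 * (∑ _u ∈ F, lG s) / ∑ u ∈ F, a u := by
        gcongr with u
        exact abs_wt_sub_wt_bshift_le hG s y u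
    _ = 2 * lG s * ((mulSupport (y : Γ → Δ)).ncard / w lG lD y) := by
        rw [Finset.sum_const, nsmul_eq_mul, hwa, Set.ncard_eq_toFinset_card _ (finite_mulSupport y)]
        ring

end Weights

open Filter in
theorem stmt14_general {Γ Δ : Type*} [Group Γ] [Group Δ]
    (lG : Γ → ℝ) (lD : Δ → ℝ) (hG : IsProperLength lG) (hD : IsProperLength lD)
    (s : Γ) :
    Tendsto
      (fun y : DeltaGamma Γ Δ =>
        Real.sqrt (∑' t : Γ,
          (xi lG lD (y : Γ → Δ) (s⁻¹ * t) - xi lG lD (bshift s y : Γ → Δ) t) ^ 2))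
      (cofinite ⊓ Filter.principal {y : DeltaGamma Γ Δ | y ≠ 1})
      (nhds 0) := by
  rw [← Real.sqrt_zero]
  refine (squeeze_zero' (Eventually.of_forall fun y => tsum_nonneg fun t => sq_nonneg _)
    (g := fun y : DeltaGamma Γ Δ => 2 * lG s * (((mulSupport (y : Γ → Δ)).ncard : ℝ) / w lG lD y))
    ?_ ?_).sqrt
  · filter_upwards [mem_inf_of_right (mem_principal_self _)] with y hy
    exact tsum_sq_xi_sub_xi_bshift_le hG hD s hy
  · exact tendsto_inf_left (by simpa using (tendsto_ncard_div_w hG hD).const_mul (2 * lG s))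

open Filter in
/-- For every `s ∈ Γ`, `‖λ(s)ξ_y − ξ_{s·y}‖₂ → 0` as `y → ∞` along the
cofinite filter on `Δ_Γ` (restricted to `y ≠ e`), where `s·y` is the Bernoulli shift
and `(λ(s)ξ)(t) = ξ(s⁻¹t)`. -/
theorem stmt14 {Γ Δ : Type*} [Group Γ] [Group Δ] [Countable Γ] [Countable Δ]
    (lG : Γ → ℝ) (lD : Δ → ℝ) (hG : IsProperLength lG) (hD : IsProperLength lD)
    (s : Γ) :
    Tendsto
      (fun y : DeltaGamma Γ Δ =>
        Real.sqrt (∑' t : Γ,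
          (xi lG lD (y : Γ → Δ) (s⁻¹ * t) - xi lG lD (bshift s y : Γ → Δ) t) ^ 2))
      (cofinite ⊓ Filter.principal {y : DeltaGamma Γ Δ | y ≠ 1})
      (nhds 0) :=
  stmt14_general lG lD hG hD s
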